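/- Let 𝒟 be the uniform probability distribution on B₋ ∪ B₊ ⊆ ℝ², where B₋ and B₊ are the closed unit discs centered at (−2,0) and (2,0) respectively, with ground truth h(x) = −1 for x ∈ B₋ and h(x) = +1 for x ∈ B₊. Define the classifier f : ℝ² → {-1,1} by f(x) = −1 if x ∈ B₋ and f(x) = +1 otherwise. Then R(f) = 0; yet for every σ ≥ 3/2 the Gaussian randomized-smoothed classifier satisfies ℙ_{δ∼𝒩(0,σ²I₂)}(f(x+δ) = +1) > 1/2 for every x ∈ ℝ², hence g(x) := argmax_{c∈{-1,1}} ℙ_{δ∼𝒩(0,σ²I₂)}(f(x+δ) = c) equals +1 everywhere and R(g) = 1/2. -/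

import Mathlib

open MeasureTheory Metric Set
open scoped ENNReal NNReal Classical

noncomputable section

/-- The Euclidean plane `ℝ²` with the `ℓ₂` metric. -/
abbrev Euc2 := EuclideanSpace ℝ (Fin 2)

/-- The (standard) risk `R(f) = ℙ_{X ∼ 𝒟}(f(X) ≠ h(X))`. -/
def risk (𝒟 : Measure Euc2) (h f : Euc2 → ℝ) : ℝ≥0∞ :=
  𝒟 {x | f x ≠ h x}

/-- The closed unit disc `B₋` centered at `(-2, 0)`. -/
def discNeg : Set Euc2 := closedBall (WithLp.toLp 2 ![(-2 : ℝ), 0] : Euc2) 1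

/-- The closed unit disc `B₊` centered at `(2, 0)`. -/
def discPos : Set Euc2 := closedBall (WithLp.toLp 2 ![(2 : ℝ), 0] : Euc2) 1

/-- The uniform probability distribution on `B₋ ∪ B₊`. -/
def discMeasure : Measure Euc2 :=
  (volume (discNeg ∪ discPos))⁻¹ • volume.restrict (discNeg ∪ discPos)

/-- The ground truth: `-1` on `B₋`, `+1` elsewhere (in particular on `B₊`). -/
def hGT (x : Euc2) : ℝ := if x ∈ discNeg then -1 else 1

/-- The classifier `f`: `-1` on `B₋`, `+1` everywhere else. -/
def fCl (x : Euc2) : ℝ := if x ∈ discNeg then -1 else 1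

/-- The centered Gaussian measure `𝒩(0, σ²I₂)` on `ℝ²`. -/
def gauss2 (σ : ℝ) : Measure Euc2 :=
  (Measure.pi fun _ : Fin 2 =>
    ProbabilityTheory.gaussianReal 0 (Real.toNNReal (σ ^ 2))).map
      (EuclideanSpace.equiv (Fin 2) ℝ).symm

/-! The planar Gaussian density is at most `1 / (2πσ²)` and a unit disc fits in a `2 × 2`
square, so every translate of `B₋` has `𝒩(0, σ²I₂)`-mass at most `2 / (πσ²)`, which is `< 1/2`
once `πσ² > 4`, e.g. for `σ ≥ 3/2`. Hence at every point the smoothed vote for `+1` beats the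
vote for `-1`, the smoothed classifier is constantly `+1`, and it errs exactly on `B₋`, which
carries half of the mass of `𝒟`. -/

open ProbabilityTheory

instance isProbabilityMeasure_gauss2 (σ : ℝ) : IsProbabilityMeasure (gauss2 σ) :=
  Measure.isProbabilityMeasure_map (by fun_prop)

lemma gaussianPDFReal_le (μ : ℝ) (v : ℝ≥0) (x : ℝ) :
    gaussianPDFReal μ v x ≤ (√(2 * Real.pi * v))⁻¹ := by
  rw [gaussianPDFReal_def]
  refine mul_le_of_le_one_right (by positivity) (Real.exp_le_one_iff.mpr ?_)
  exact div_nonpos_of_nonpos_of_nonneg (neg_nonpos.mpr (sq_nonneg _)) (by positivity)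

lemma gaussianReal_le_smul_volume (μ : ℝ) {v : ℝ≥0} (hv : v ≠ 0) :
    gaussianReal μ v ≤ ENNReal.ofReal (√(2 * Real.pi * v))⁻¹ • volume := by
  rw [gaussianReal_of_var_ne_zero _ hv, ← withDensity_const]
  exact withDensity_mono (.of_forall fun x => ENNReal.ofReal_le_ofReal (gaussianPDFReal_le μ v x))

lemma gaussianReal_Icc_le (μ : ℝ) {v : ℝ≥0} (hv : v ≠ 0) (a b : ℝ) :
    gaussianReal μ v (Icc a b) ≤ ENNReal.ofReal ((b - a) / √(2 * Real.pi * v)) :=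
  calc gaussianReal μ v (Icc a b)
      ≤ ENNReal.ofReal (√(2 * Real.pi * v))⁻¹ * volume (Icc a b) :=
        gaussianReal_le_smul_volume μ hv _
    _ = ENNReal.ofReal ((b - a) / √(2 * Real.pi * v)) := by
        rw [Real.volume_Icc, ← ENNReal.ofReal_mul (by positivity), div_eq_inv_mul]

lemma closedBall_subset_preimage_box (y : Euc2) (r : ℝ) :
    (EuclideanSpace.equiv (Fin 2) ℝ).symm ⁻¹' closedBall y r
      ⊆ univ.pi fun i => Icc (y i - r) (y i + r) := by
  intro x hx i _
  have := (PiLp.norm_apply_le (WithLp.toLp 2 x - y) i).trans (mem_closedBall_iff_norm.mp hx)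
  simp only [PiLp.sub_apply, Real.norm_eq_abs, abs_sub_le_iff] at this
  exact ⟨by linarith, by linarith⟩

lemma gauss2_closedBall_le {σ : ℝ} (hσ : σ ≠ 0) (y : Euc2) {r : ℝ} (hr : 0 ≤ r) :
    gauss2 σ (closedBall y r) ≤ ENNReal.ofReal (2 * r ^ 2 / (Real.pi * σ ^ 2)) := by
  have hv : (σ ^ 2).toNNReal ≠ 0 := by simpa using hσ
  have hvσ : ((σ ^ 2).toNNReal : ℝ) = σ ^ 2 := Real.coe_toNNReal _ (sq_nonneg σ)
  calc gauss2 σ (closedBall y r)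
      ≤ Measure.pi (fun _ : Fin 2 => gaussianReal 0 (σ ^ 2).toNNReal)
          (univ.pi fun i => Icc (y i - r) (y i + r)) := by
        rw [gauss2, Measure.map_apply (by fun_prop) measurableSet_closedBall]
        exact measure_mono (closedBall_subset_preimage_box y r)
    _ ≤ ∏ i : Fin 2, ENNReal.ofReal (2 * r / √(2 * Real.pi * σ ^ 2)) := by
        rw [Measure.pi_pi]
        gcongr with i
        refine (gaussianReal_Icc_le 0 hv _ _).trans_eq ?_
        rw [hvσ]
        ring_nf
    _ = ENNReal.ofReal (2 * r ^ 2 / (Real.pi * σ ^ 2)) := by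
        rw [Fin.prod_const, ← ENNReal.ofReal_pow (by positivity)]
        congr 1
        rw [div_pow, Real.sq_sqrt (by positivity)]
        field_simp

lemma gauss2_closedBall_one_lt_half {σ : ℝ} (hσ : 4 < Real.pi * σ ^ 2) (y : Euc2) :
    gauss2 σ (closedBall y 1) < 1 / 2 := by
  have hσ0 : σ ≠ 0 := by rintro rfl; norm_num at hσ
  refine (gauss2_closedBall_le hσ0 y zero_le_one).trans_lt ?_
  rw [ENNReal.lt_div_iff_mul_lt (by norm_num) (by norm_num), ← ENNReal.ofReal_ofNat 2,
    ← ENNReal.ofReal_mul (by positivity), ENNReal.ofReal_lt_one, one_pow,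
    div_mul_eq_mul_div, div_lt_one (by positivity)]
  linarith

lemma half_lt_measure_compl {Ω : Type*} [MeasurableSpace Ω] {μ : Measure Ω}
    [IsProbabilityMeasure μ] {s : Set Ω} (hs : MeasurableSet s) (h : μ s < 1 / 2) :
    1 / 2 < μ sᶜ := by
  rw [prob_compl_eq_one_sub hs, lt_tsub_iff_right]
  calc 1 / 2 + μ s < 1 / 2 + 1 / 2 := ENNReal.add_lt_add_left (by simp) h
    _ = 1 := ENNReal.add_halves 1

lemma cond_union_left_eq_half {Ω : Type*} [MeasurableSpace Ω] {μ : Measure Ω} {s t : Set Ω}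
    (hst : Disjoint s t) (hs : MeasurableSet s) (ht : MeasurableSet t) (hμ : μ s = μ t)
    (h₀ : μ s ≠ 0) (h_top : μ s ≠ ∞) : μ[s | s ∪ t] = 1 / 2 := by
  rw [cond_apply (hs.union ht), union_inter_cancel_left, measure_union hst ht, ← hμ, ← two_mul,
    ENNReal.mul_inv (by simp) (by simp), mul_assoc, ENNReal.inv_mul_cancel h₀ h_top, mul_one,
    one_div]

lemma fCl_eq_neg_one_iff (z : Euc2) : fCl z = -1 ↔ z ∈ discNeg := by
  unfold fCl; split_ifs with h <;> norm_num [h]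

lemma fCl_eq_one_iff (z : Euc2) : fCl z = 1 ↔ z ∉ discNeg := by
  unfold fCl; split_ifs with h <;> norm_num [h]

lemma disjoint_discNeg_discPos : Disjoint discNeg discPos := by
  refine closedBall_disjoint_closedBall ?_
  rw [EuclideanSpace.dist_eq]
  simp [Fin.sum_univ_two, Real.dist_eq]
  norm_num

-- `discMeasure` is definitionally the conditional measure `volume[|discNeg ∪ discPos]`.
lemma discMeasure_discNeg : discMeasure discNeg = 1 / 2 :=
  cond_union_left_eq_half disjoint_discNeg_discPos measurableSet_closedBall
    measurableSet_closedBall (by rw [discNeg, discPos, Measure.addHaar_closedBall_center,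
      Measure.addHaar_closedBall_center volume (WithLp.toLp 2 ![2, 0])])
    (measure_closedBall_pos _ _ one_pos).ne' measure_closedBall_lt_top.ne

lemma setOf_fCl_add_eq_neg_one (x : Euc2) :
    {δ | fCl (x + δ) = -1} = closedBall (WithLp.toLp 2 ![-2, 0] - x) 1 := by
  ext δ
  rw [mem_ofPred_eq, fCl_eq_neg_one_iff, ← preimage_add_closedBall]
  rfl

lemma gauss2_fCl_eq_neg_one_lt_half {σ : ℝ} (hσ : 4 < Real.pi * σ ^ 2) (x : Euc2) :
    gauss2 σ {δ | fCl (x + δ) = -1} < 1 / 2 := by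
  rw [setOf_fCl_add_eq_neg_one]
  exact gauss2_closedBall_one_lt_half hσ _

lemma half_lt_gauss2_fCl_eq_one {σ : ℝ} (hσ : 4 < Real.pi * σ ^ 2) (x : Euc2) :
    1 / 2 < gauss2 σ {δ | fCl (x + δ) = 1} := by
  have : {δ | fCl (x + δ) = 1} = {δ | fCl (x + δ) = -1}ᶜ := by
    ext δ
    simp only [mem_ofPred_eq, mem_compl_iff, fCl_eq_one_iff, fCl_eq_neg_one_iff]
  rw [this]
  refine half_lt_measure_compl ?_ (gauss2_fCl_eq_neg_one_lt_half hσ x)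
  rw [setOf_fCl_add_eq_neg_one]
  exact measurableSet_closedBall

/-- The two-discs example: the classifier `f` has risk `0`; yet for every
`σ ≥ 3/2`, Gaussian randomized smoothing with parameter `σ` satisfies
`ℙ_{δ∼𝒩(0,σ²I₂)}(f(x+δ) = +1) > 1/2` for every `x ∈ ℝ²`, hence any smoothed
classifier `g(x) = argmax_c ℙ_{δ∼𝒩(0,σ²I₂)}(f(x+δ) = c)` is identically `+1`
and has risk `1/2`. -/
theorem stmt18 :
    risk discMeasure hGT fCl = 0 ∧
    ∀ σ : ℝ, 3 / 2 ≤ σ →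
      (∀ x : Euc2, (1 : ℝ≥0∞) / 2 < gauss2 σ {δ | fCl (x + δ) = 1}) ∧
      ∀ g : Euc2 → ℝ,
        (∀ x : Euc2, (g x = 1 ∨ g x = -1) ∧
          ∀ c : ℝ, c = 1 ∨ c = -1 →
            gauss2 σ {δ | fCl (x + δ) = c} ≤ gauss2 σ {δ | fCl (x + δ) = g x}) →
        (∀ x, g x = 1) ∧ risk discMeasure hGT g = 1 / 2 := by
  refine ⟨by simp [risk, fCl, hGT], fun σ hσ => ?_⟩
  have hπσ : 4 < Real.pi * σ ^ 2 := by nlinarith [Real.pi_gt_three]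
  refine ⟨half_lt_gauss2_fCl_eq_one hπσ, fun g hg => ?_⟩
  have hg_one : ∀ x, g x = 1 := by
    intro x
    obtain ⟨hx | hx, hmax⟩ := hg x
    · exact hx
    · have := (hmax 1 (Or.inl rfl)).trans_lt (hx ▸ gauss2_fCl_eq_neg_one_lt_half hπσ x)
      exact absurd (half_lt_gauss2_fCl_eq_one hπσ x) this.not_gt
  have h_err : {x | g x ≠ hGT x} = discNeg := by
    ext x
    by_cases hx : x ∈ discNeg <;> norm_num [hg_one, hGT, hx]
  exact ⟨hg_one, by rw [risk, h_err, discMeasure_discNeg]⟩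

end
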